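/- Let τ > 0, let 0 ≤ ζ ≤ √3 and let d be a real number with d² ≤ 2ζ(1 − ζ²/3). Let θ : [0,∞) → ℝ be twice continuously differentiable with θ''(t) + τ·θ'(t) + θ(t)² − 1 = 0 for all t ≥ 0, θ(0) = ζ and θ'(0) = d. Then θ(t) → 1 as t → ∞. -/

import Mathlib

/-!
Along a solution the energy `E = θ'²/2 + θ³/3 - θ` satisfies `E' = -τ θ'² ≤ 0`, and the condition
on `d` says exactly that `E(0) ≤ 0`. Hence `θ³/3 - θ ≤ E ≤ 0` forever; since `θ(0) ≥ 0` and the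
potential is positive at `-1`, the solution stays in `[0, √3]` and `θ'` stays bounded. The
energy therefore converges, so `∫ θ'²` is finite, and Barbalat's lemma gives `θ' → 0` and then
`θ'' → 0`. The equation leaves `θ² → 1`, and `θ ≥ 0` selects the limit `1`.
-/

open Set Filter Topology

theorem AntitoneOn.exists_tendsto_atTop_of_forall_le {α : Type*} [LinearOrder α] {f : α → ℝ}
    {a : α} {m : ℝ} (hf : AntitoneOn f (Ici a)) (hm : ∀ t ∈ Ici a, m ≤ f t) :
    ∃ L, Tendsto f atTop (𝓝 L) := by
  have hanti : Antitone fun t => f (max t a) := fun s t hst =>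
    hf (le_max_right s a) (le_max_right t a) (max_le_max hst le_rfl)
  have hbdd : BddBelow (range fun t => f (max t a)) := by
    refine ⟨m, ?_⟩
    rintro - ⟨t, rfl⟩
    exact hm _ (le_max_right t a)
  refine ⟨_, (tendsto_atTop_ciInf hanti hbdd).congr' ?_⟩
  filter_upwards [eventually_ge_atTop a] with t ht
  rw [max_eq_left ht]

/-- Barbalat's lemma. -/
theorem tendsto_zero_of_hasDerivWithinAt_of_tendsto {H h h' : ℝ → ℝ} {a K L : ℝ}
    (hH : ∀ t ∈ Ici a, HasDerivWithinAt H (h t) (Ici a) t)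
    (hh : ∀ t ∈ Ici a, HasDerivWithinAt h (h' t) (Ici a) t)
    (hb : ∀ t ∈ Ici a, |h' t| ≤ K) (hL : Tendsto H atTop (𝓝 L)) :
    Tendsto h atTop (𝓝 0) := by
  have hK : 0 ≤ K := (abs_nonneg _).trans (hb a self_mem_Ici)
  rw [Metric.tendsto_nhds]
  intro ε hε
  set δ := ε / (2 * K + 1)
  have hδ : 0 < δ := by positivity
  have hKδ : K * δ ≤ ε / 2 := by
    rw [mul_div_assoc', div_le_div_iff₀ (by positivity) two_pos]
    nlinarith
  have hinc : Tendsto (fun t => H (t + δ) - H t) atTop (𝓝 0) := by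
    simpa using (hL.comp (tendsto_atTop_add_const_right _ δ tendsto_id)).sub hL
  -- If `|h t| ≥ ε`, then `|h| > ε/2` on `[t, t + δ]`, so `H` moves by more than `εδ/2` there.
  filter_upwards [eventually_gt_atTop a,
    hinc.eventually (Metric.ball_mem_nhds 0 (by positivity : 0 < ε * δ / 2))] with t ht hsmall
  rw [Real.dist_eq, sub_zero] at hsmall
  rw [Real.dist_eq, sub_zero]
  obtain ⟨c, hc, hslope⟩ := exists_hasDerivAt_eq_slope H h (lt_add_of_pos_right t hδ)
    (fun s hs => (hH s (ht.le.trans hs.1)).continuousWithinAt.mono fun u hu => ht.le.trans hu.1)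
    (fun s hs => (hH s (ht.le.trans hs.1.le)).hasDerivAt (Ici_mem_nhds (ht.trans hs.1)))
  rw [add_sub_cancel_left, eq_div_iff hδ.ne'] at hslope
  have hhc : |h c| < ε / 2 := by
    rw [← hslope, abs_mul, abs_of_pos hδ] at hsmall
    nlinarith
  have hlip : |h c - h t| ≤ K * |c - t| := by
    simpa only [Real.norm_eq_abs] using (convex_Ici a).norm_image_sub_le_of_norm_hasDerivWithin_le
      hh (by simpa only [Real.norm_eq_abs] using hb) ht.le (ht.le.trans hc.1.le)
  have hct : |c - t| ≤ δ := by
    rw [abs_of_pos (sub_pos.mpr hc.1)]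
    linarith [hc.2]
  calc |h t| ≤ |h c| + |h c - h t| := by
        simpa [abs_sub_comm, add_comm] using abs_sub_le (h t) (h c) 0
    _ < ε := by nlinarith

theorem nonneg_of_cube_div_three_sub_self_nonpos {f : ℝ → ℝ} {a : ℝ} (hf : ContinuousOn f (Ici a))
    (ha : 0 ≤ f a) (hV : ∀ t ∈ Ici a, f t ^ 3 / 3 - f t ≤ 0) : ∀ t ∈ Ici a, 0 ≤ f t := by
  intro t ht
  by_contra! hneg
  have hlt : f t < -1 := by
    by_contra! h
    nlinarith [hV t ht, mul_pos (neg_pos.2 hneg) (show 0 < 3 - f t ^ 2 by nlinarith)]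
  obtain ⟨s, hs, hfs⟩ := isPreconnected_Ici.intermediate_value ht self_mem_Ici hf
    (⟨hlt.le, by linarith⟩ : (-1 : ℝ) ∈ Icc (f t) (f a))
  have := hV s hs
  rw [hfs] at this
  norm_num at this

noncomputable def energy (θ θ' : ℝ → ℝ) (t : ℝ) : ℝ := θ' t ^ 2 / 2 + θ t ^ 3 / 3 - θ t

structure IsSolution (τ : ℝ) (θ θ' θ'' : ℝ → ℝ) : Prop where
  hasDerivWithinAt : ∀ t ∈ Ici (0 : ℝ), HasDerivWithinAt θ (θ' t) (Ici 0) t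
  hasDerivWithinAt_deriv : ∀ t ∈ Ici (0 : ℝ), HasDerivWithinAt θ' (θ'' t) (Ici 0) t
  ode : ∀ t : ℝ, 0 ≤ t → θ'' t + τ * θ' t + θ t ^ 2 - 1 = 0

namespace IsSolution

variable {τ : ℝ} {θ θ' θ'' : ℝ → ℝ}

theorem hasDerivWithinAt_energy (hθ : IsSolution τ θ θ' θ'') {t : ℝ} (ht : t ∈ Ici 0) :
    HasDerivWithinAt (energy θ θ') (-(τ * θ' t ^ 2)) (Ici 0) t := by
  have hθt := hθ.hasDerivWithinAt t ht
  refine ((((hθ.hasDerivWithinAt_deriv t ht).pow 2).div_const 2).add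
    ((hθt.pow 3).div_const 3)).sub hθt |>.congr_deriv ?_
  push_cast
  linear_combination θ' t * hθ.ode t ht

theorem energy_antitoneOn (hθ : IsSolution τ θ θ' θ'') (hτ : 0 ≤ τ) :
    AntitoneOn (energy θ θ') (Ici 0) :=
  antitoneOn_of_hasDerivWithinAt_nonpos (convex_Ici 0)
    (fun _ ht => (hθ.hasDerivWithinAt_energy ht).continuousWithinAt)
    (fun _ ht => (hθ.hasDerivWithinAt_energy (interior_subset ht)).mono interior_subset)
    (fun t _ => neg_nonpos.mpr (by positivity))

/-- The equation itself shows that `θ''` is differentiable. -/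
theorem hasDerivWithinAt_deriv2 (hθ : IsSolution τ θ θ' θ'') {t : ℝ} (ht : t ∈ Ici 0) :
    HasDerivWithinAt θ'' (-(2 * θ t * θ' t) - τ * θ'' t) (Ici 0) t := by
  have h : HasDerivWithinAt (fun s => 1 - θ s ^ 2 - τ * θ' s)
      (-(2 * θ t * θ' t) - τ * θ'' t) (Ici 0) t := by
    refine (((hasDerivWithinAt_const t _ 1).sub ((hθ.hasDerivWithinAt t ht).pow 2)).sub
      ((hθ.hasDerivWithinAt_deriv t ht).const_mul τ)).congr_deriv ?_
    push_cast
    ring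
  refine h.congr (fun s hs => ?_) ?_
  · linarith [hθ.ode s hs]
  · linarith [hθ.ode t ht]

theorem bounds_of_energy_nonpos (hθ : IsSolution τ θ θ' θ'') (hτ : 0 ≤ τ) (h0 : 0 ≤ θ 0)
    (hE0 : energy θ θ' 0 ≤ 0) : ∀ t ∈ Ici (0 : ℝ), θ t ∈ Icc 0 2 ∧ |θ' t| ≤ 2 := by
  have hE : ∀ t ∈ Ici (0 : ℝ), θ' t ^ 2 / 2 + θ t ^ 3 / 3 - θ t ≤ 0 := fun t ht =>
    (hθ.energy_antitoneOn hτ self_mem_Ici ht ht).trans hE0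
  have hnn := nonneg_of_cube_div_three_sub_self_nonpos
    (fun t ht => (hθ.hasDerivWithinAt t ht).continuousWithinAt) h0
    (fun t ht => by nlinarith [hE t ht, sq_nonneg (θ' t)])
  intro t ht
  have hθt := hnn t ht
  have hθ2 : θ t ≤ 2 := by
    by_contra! h
    nlinarith [hE t ht, sq_nonneg (θ' t), mul_pos (by linarith : 0 < θ t)
      (show 0 < θ t ^ 2 - 3 by nlinarith)]
  refine ⟨⟨hθt, hθ2⟩, abs_le_of_sq_le_sq ?_ zero_le_two⟩
  nlinarith [hE t ht, mul_nonneg (sq_nonneg (θ t - 1)) (by linarith : (0 : ℝ) ≤ θ t + 2)]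

theorem abs_deriv2_le (hθ : IsSolution τ θ θ' θ'') (hτ : 0 ≤ τ)
    (hb : ∀ t ∈ Ici (0 : ℝ), θ t ∈ Icc 0 2 ∧ |θ' t| ≤ 2) {t : ℝ} (ht : t ∈ Ici 0) :
    |θ'' t| ≤ 3 + 2 * τ := by
  obtain ⟨⟨hθ0, hθ2⟩, hθ'⟩ := hb t ht
  have hτθ' : |τ * θ' t| ≤ 2 * τ := by
    rw [abs_mul, abs_of_nonneg hτ, mul_comm 2]
    exact mul_le_mul_of_nonneg_left hθ' hτ
  rw [abs_le]
  constructor <;> nlinarith [abs_le.1 hτθ', hθ.ode t ht]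

theorem tendsto_deriv_zero (hθ : IsSolution τ θ θ' θ'') (hτ : 0 < τ)
    (hb : ∀ t ∈ Ici (0 : ℝ), θ t ∈ Icc 0 2 ∧ |θ' t| ≤ 2) :
    Tendsto θ' atTop (𝓝 0) := by
  obtain ⟨L, hL⟩ := (hθ.energy_antitoneOn hτ.le).exists_tendsto_atTop_of_forall_le
    (m := -2 / 3) fun t ht => by
      obtain ⟨⟨hθ0, -⟩, -⟩ := hb t ht
      unfold energy
      nlinarith [sq_nonneg (θ' t), mul_nonneg (sq_nonneg (θ t - 1)) (by linarith : 0 ≤ θ t + 2)]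
  have hsq : Tendsto (fun t => θ' t ^ 2) atTop (𝓝 0) := by
    refine tendsto_zero_of_hasDerivWithinAt_of_tendsto (a := 0)
      (H := fun t => -energy θ θ' t / τ) (h' := fun t => 2 * θ' t * θ'' t)
      (K := 2 * 2 * (3 + 2 * τ)) (fun t ht => ?_) (fun t ht => ?_) (fun t ht => ?_)
      (hL.neg.div_const τ)
    · exact (hθ.hasDerivWithinAt_energy ht).neg.div_const τ |>.congr_deriv (by field_simp)
    · simpa using (hθ.hasDerivWithinAt_deriv t ht).fun_pow 2
    · rw [abs_mul, abs_mul, abs_two]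
      gcongr
      exacts [(hb t ht).2, hθ.abs_deriv2_le hτ.le hb ht]
  rw [tendsto_zero_iff_abs_tendsto_zero]
  simpa [Function.comp_def, Real.sqrt_sq_eq_abs] using hsq.sqrt

theorem tendsto_deriv2_zero (hθ : IsSolution τ θ θ' θ'') (hτ : 0 ≤ τ)
    (hb : ∀ t ∈ Ici (0 : ℝ), θ t ∈ Icc 0 2 ∧ |θ' t| ≤ 2)
    (hθ' : Tendsto θ' atTop (𝓝 0)) : Tendsto θ'' atTop (𝓝 0) := by
  refine tendsto_zero_of_hasDerivWithinAt_of_tendsto hθ.hasDerivWithinAt_deriv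
    (fun t ht => hθ.hasDerivWithinAt_deriv2 ht) (K := 2 * 2 * 2 + τ * (3 + 2 * τ))
    (fun t ht => ?_) hθ'
  obtain ⟨⟨hθ0, hθ2⟩, hθ't⟩ := hb t ht
  calc |-(2 * θ t * θ' t) - τ * θ'' t| ≤ 2 * |θ t| * |θ' t| + τ * |θ'' t| := by
        simpa [abs_mul, abs_of_nonneg hτ] using abs_sub (-(2 * θ t * θ' t)) (τ * θ'' t)
    _ ≤ 2 * 2 * 2 + τ * (3 + 2 * τ) := by
        rw [abs_of_nonneg hθ0]
        gcongr
        exact hθ.abs_deriv2_le hτ hb ht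

end IsSolution

theorem stmt_7_general (τ ζ d : ℝ) (hτ : 0 < τ) (hζ0 : 0 ≤ ζ)
    (hd : d ^ 2 ≤ 2 * ζ * (1 - ζ ^ 2 / 3)) (θ θ' θ'' : ℝ → ℝ)
    (hd1 : ∀ t ∈ Ici (0 : ℝ), HasDerivWithinAt θ (θ' t) (Ici 0) t)
    (hd2 : ∀ t ∈ Ici (0 : ℝ), HasDerivWithinAt θ' (θ'' t) (Ici 0) t)
    (heq : ∀ t : ℝ, 0 ≤ t → θ'' t + τ * θ' t + (θ t) ^ 2 - 1 = 0)
    (h0 : θ 0 = ζ) (h0' : θ' 0 = d) :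
    Tendsto θ atTop (nhds 1) := by
  have hθ : IsSolution τ θ θ' θ'' := ⟨hd1, hd2, heq⟩
  have hE0 : energy θ θ' 0 ≤ 0 := by
    rw [energy, h0, h0']
    linarith
  have hb := hθ.bounds_of_energy_nonpos hτ.le (h0 ▸ hζ0) hE0
  have hθ' := hθ.tendsto_deriv_zero hτ hb
  have hθ'' := hθ.tendsto_deriv2_zero hτ.le hb hθ'
  have hsq : Tendsto (fun t => θ t ^ 2) atTop (𝓝 1) := by
    refine (by simpa using (tendsto_const_nhds (x := (1 : ℝ))).sub hθ'' |>.sub (hθ'.const_mul τ)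
      : Tendsto (fun t => 1 - θ'' t - τ * θ' t) atTop (𝓝 1)).congr' ?_
    filter_upwards [eventually_ge_atTop 0] with t ht
    linarith [heq t ht]
  refine (by simpa using hsq.sqrt : Tendsto (fun t => √(θ t ^ 2)) atTop (𝓝 1)).congr' ?_
  filter_upwards [eventually_ge_atTop 0] with t ht
  exact Real.sqrt_sq (hb t ht).1.1

/-- Paper's Theorem 3.1: for `τ > 0`, `0 ≤ ζ ≤ √3` and `d² ≤ 2ζ(1 - ζ²/3)`, the global
solution of `θ'' + τθ' + θ² - 1 = 0` on `[0,∞)` with `θ(0) = ζ`, `θ'(0) = d` tends to `1`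
at infinity. -/
theorem stmt_7 (τ ζ d : ℝ) (hτ : 0 < τ) (hζ0 : 0 ≤ ζ) (hζ3 : ζ ≤ Real.sqrt 3)
    (hd : d ^ 2 ≤ 2 * ζ * (1 - ζ ^ 2 / 3)) (θ θ' θ'' : ℝ → ℝ)
    (hd1 : ∀ t ∈ Ici (0 : ℝ), HasDerivWithinAt θ (θ' t) (Ici 0) t)
    (hd2 : ∀ t ∈ Ici (0 : ℝ), HasDerivWithinAt θ' (θ'' t) (Ici 0) t)
    (hc : ContinuousOn θ'' (Ici 0))
    (heq : ∀ t : ℝ, 0 ≤ t → θ'' t + τ * θ' t + (θ t) ^ 2 - 1 = 0)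
    (h0 : θ 0 = ζ) (h0' : θ' 0 = d) :
    Tendsto θ atTop (nhds 1) :=
  stmt_7_general τ ζ d hτ hζ0 hd θ θ' θ'' hd1 hd2 heq h0 h0'
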